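/- Let m ∈ ℂ and define for τ, b > 0 and r ∈ ℝ with |((τ−b)²−r²)/((τ+b+2)²−r²)| < 1 the function E(r,τ;b;m) := 2^{2im}(1+b)^{2im}((τ+b+2)² − r²)^{−im} F(im, im; 1; ((τ−b)² − r²)/((τ+b+2)² − r²)). Then E satisfies the generalized Euler–Poisson–Darboux equation in the variables (r,τ): ∂²_τ E − ∂²_r E + (2im/(τ+1)) ∂_τ E = 0. -/

import Mathlib

/-!
Along a line in `τ` or in `r` the kernel is `s ↦ C g(s)^(-a) f(h(s)/g(s))` with `a = im`, quadratic
`g`, `h` and `f = F(a,a;1;·)`, so by the chain rule its second derivative is a combination of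
`f`, `f'`, `f''` at `z = h/g`. In `∂²_τ − ∂²_r + (2a/(τ+1)) ∂_τ` the three coefficients come out as
`4(b+1)/(g(τ+1))` times `-a²`, `1 − (2a+1)z` and `z(1−z)`, the coefficients of the hypergeometric
equation satisfied by `f`.
-/

noncomputable section
open Complex

def Eker (F : ℂ → ℂ → ℂ → ℂ → ℂ) (m : ℂ) (b : ℝ) (r τ : ℝ) : ℂ :=
  (2 : ℂ) ^ (2 * I * m) * ((1 + b : ℝ) : ℂ) ^ (2 * I * m)
    * ((((τ + b + 2) ^ 2 - r ^ 2 : ℝ)) : ℂ) ^ (-(I * m))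
    * F (I * m) (I * m) 1
        ((((τ - b) ^ 2 - r ^ 2) / ((τ + b + 2) ^ 2 - r ^ 2) : ℝ) : ℂ)

theorem Eker_eq_const_mul (F : ℂ → ℂ → ℂ → ℂ → ℂ) (m : ℂ) (b r τ : ℝ) :
    Eker F m b r τ = (2 : ℂ) ^ (2 * I * m) * ((1 + b : ℝ) : ℂ) ^ (2 * I * m)
      * ((((τ + b + 2) ^ 2 - r ^ 2 : ℝ) : ℂ) ^ (-(I * m))
        * F (I * m) (I * m) 1 ((((τ - b) ^ 2 - r ^ 2) / ((τ + b + 2) ^ 2 - r ^ 2) : ℝ) : ℂ)) :=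
  mul_assoc _ _ _

open Filter Topology

section

variable {a : ℂ} {t : ℝ}

theorem HasDerivAt.comp_ofReal_comp {f : ℂ → ℂ} {f' : ℂ} {z : ℝ → ℝ} {z' : ℝ}
    (hf : HasDerivAt f f' (z t)) (hz : HasDerivAt z z' t) :
    HasDerivAt (fun s => f (z s)) (z' * f') t :=
  (mul_comm f' _ ▸ hf.comp t hz.ofReal_comp :)

theorem HasDerivAt.ofReal_cpow_neg_mul {g : ℝ → ℝ} {ψ : ℝ → ℂ} {g' : ℝ} {ψ' : ℂ}
    (hg : HasDerivAt g g' t) (hψ : HasDerivAt ψ ψ' t) (hgt : 0 < g t) :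
    HasDerivAt (fun s => (g s : ℂ) ^ (-a) * ψ s)
      ((g t : ℂ) ^ (-a) * (ψ' - a * (g' / g t) * ψ t)) t := by
  have hne : (g t : ℂ) ≠ 0 := ofReal_ne_zero.mpr hgt.ne'
  have hpow : HasDerivAt (fun s => (g s : ℂ) ^ (-a)) (-a * (g t : ℂ) ^ (-a - 1) * g') t :=
    HasDerivAt.comp (h₂ := fun w : ℂ => w ^ (-a)) t
      (hasStrictDerivAt_cpow_const (ofReal_mem_slitPlane.2 hgt)).hasDerivAt hg.ofReal_comp
  refine (hpow.fun_mul hψ).congr_deriv ?_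
  rw [sub_eq_add_neg (-a) 1, cpow_add _ _ hne, cpow_neg_one]
  field_simp
  ring

theorem HasDerivAt.ofReal_cpow_neg_mul_comp {f : ℂ → ℂ} {f' : ℂ} {g z : ℝ → ℝ} {g' z' : ℝ}
    (hg : HasDerivAt g g' t) (hz : HasDerivAt z z' t) (hf : HasDerivAt f f' (z t))
    (hgt : 0 < g t) :
    HasDerivAt (fun s => (g s : ℂ) ^ (-a) * f (z s))
      ((g t : ℂ) ^ (-a) * (z' * f' - a * (g' / g t) * f (z t))) t :=
  hg.ofReal_cpow_neg_mul (hf.comp_ofReal_comp hz) hgt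

theorem hasDerivAt_deriv_ofReal_cpow_neg_mul_comp {f : ℂ → ℂ} {U : Set ℂ}
    (hf : DifferentiableOn ℂ f U) (hU : IsOpen U) {g z g' z' : ℝ → ℝ} {g'' z'' : ℝ}
    (hg : ∀ᶠ s in 𝓝 t, HasDerivAt g (g' s) s) (hz : ∀ᶠ s in 𝓝 t, HasDerivAt z (z' s) s)
    (hgz : ∀ᶠ s in 𝓝 t, 0 < g s ∧ (z s : ℂ) ∈ U)
    (hg' : HasDerivAt g' g'' t) (hz' : HasDerivAt z' z'' t) :
    HasDerivAt (deriv fun s => (g s : ℂ) ^ (-a) * f (z s))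
      ((g t : ℂ) ^ (-a) * ((a * (a + 1) * (g' t / g t) ^ 2 - a * (g'' / g t)) * f (z t)
        + (z'' - 2 * a * (g' t / g t) * z' t) * deriv f (z t)
        + z' t ^ 2 * deriv (deriv f) (z t))) t := by
  have hf' : ∀ w ∈ U, HasDerivAt f (deriv f w) w := fun w hw =>
    (hf.differentiableAt (hU.mem_nhds hw)).hasDerivAt
  have hf'' : ∀ w ∈ U, HasDerivAt (deriv f) (deriv (deriv f) w) w := fun w hw =>
    ((hf.deriv hU).differentiableAt (hU.mem_nhds hw)).hasDerivAt
  have hderiv : (deriv fun s => (g s : ℂ) ^ (-a) * f (z s)) =ᶠ[𝓝 t]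
      fun s => (g s : ℂ) ^ (-a) * (z' s * deriv f (z s) - a * (g' s / g s) * f (z s)) := by
    filter_upwards [hg, hz, hgz] with s hgs hzs ⟨hgpos, hzU⟩
    exact (hgs.ofReal_cpow_neg_mul_comp hzs (hf' _ hzU) hgpos).deriv
  obtain ⟨hgt, hzt⟩ := hgz.self_of_nhds
  have hzt' := hz.self_of_nhds
  have hχ : HasDerivAt (fun s => (z' s : ℂ) * deriv f (z s) - a * (g' s / g s) * f (z s))
      (z'' * deriv f (z t) + z' t * (z' t * deriv (deriv f) (z t))
        - (a * ((g'' * g t - g' t * g' t) / g t ^ 2 : ℝ) * f (z t)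
          + a * (g' t / g t) * (z' t * deriv f (z t)))) t := by
    have hL := (hg'.fun_div hg.self_of_nhds hgt.ne').ofReal_comp.const_mul a
    push_cast at hL ⊢
    exact (hz'.ofReal_comp.fun_mul ((hf'' _ hzt).comp_ofReal_comp hzt')).fun_sub
      (hL.fun_mul ((hf' _ hzt).comp_ofReal_comp hzt'))
  refine ((hg.self_of_nhds.ofReal_cpow_neg_mul hχ hgt).congr_of_eventuallyEq hderiv).congr_deriv ?_
  have hne : (g t : ℂ) ≠ 0 := ofReal_ne_zero.mpr hgt.ne'
  push_cast
  field_simp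
  ring

theorem HasDerivAt.div_deriv {g h g' h' : ℝ → ℝ} {g'' h'' : ℝ}
    (hg : HasDerivAt g (g' t) t) (hh : HasDerivAt h (h' t) t)
    (hg' : HasDerivAt g' g'' t) (hh' : HasDerivAt h' h'' t) (hgt : g t ≠ 0) :
    HasDerivAt (fun s => (h' s * g s - h s * g' s) / g s ^ 2)
      (((h'' * g t - h t * g'') * g t - 2 * g' t * (h' t * g t - h t * g' t)) / g t ^ 3) t := by
  refine ((((hh'.fun_mul hg).fun_sub (hh.fun_mul hg')).fun_div (hg.fun_pow 2)
    (pow_ne_zero 2 hgt))).congr_deriv ?_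
  field_simp
  ring

theorem ofReal_div_mem_ball {u v : ℝ} (huv : |u| < v) : ((u / v : ℝ) : ℂ) ∈ Metric.ball 0 1 := by
  have hv : 0 < v := (abs_nonneg u).trans_lt huv
  rw [mem_ball_zero_iff, norm_real, Real.norm_eq_abs, abs_div, abs_of_pos hv]
  exact (div_lt_one hv).mpr huv

theorem hasDerivAt_deriv_ofReal_cpow_neg_mul_comp_div {f : ℂ → ℂ}
    (hf : DifferentiableOn ℂ f (Metric.ball 0 1)) {g h g' h' : ℝ → ℝ} {g'' h'' : ℝ}
    (hg : ∀ s, HasDerivAt g (g' s) s) (hh : ∀ s, HasDerivAt h (h' s) s)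
    (hg' : HasDerivAt g' g'' t) (hh' : HasDerivAt h' h'' t) (hht : |h t| < g t) :
    HasDerivAt (deriv fun s => (g s : ℂ) ^ (-a) * f ((h s / g s : ℝ) : ℂ))
      ((g t : ℂ) ^ (-a) * ((a * (a + 1) * (g' t / g t) ^ 2 - a * (g'' / g t))
          * f ((h t / g t : ℝ) : ℂ)
        + ((((h'' * g t - h t * g'') * g t - 2 * g' t * (h' t * g t - h t * g' t)) / g t ^ 3 : ℝ)
          - 2 * a * (g' t / g t) * ((h' t * g t - h t * g' t) / g t ^ 2 : ℝ))
          * deriv f ((h t / g t : ℝ) : ℂ)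
        + ((h' t * g t - h t * g' t) / g t ^ 2 : ℝ) ^ 2
          * deriv (deriv f) ((h t / g t : ℝ) : ℂ))) t := by
  have hnear : ∀ᶠ s in 𝓝 t, |h s| < g s :=
    (isOpen_lt (continuous_iff_continuousAt.2 fun s => (hh s).continuousAt).abs
      (continuous_iff_continuousAt.2 fun s => (hg s).continuousAt)).mem_nhds hht
  have hgpos : ∀ᶠ s in 𝓝 t, 0 < g s := hnear.mono fun s hs => (abs_nonneg _).trans_lt hs
  refine hasDerivAt_deriv_ofReal_cpow_neg_mul_comp (z := fun s => h s / g s)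
    (z' := fun s => (h' s * g s - h s * g' s) / g s ^ 2) hf Metric.isOpen_ball
    (Eventually.of_forall hg) ?_ ?_ hg' ((hg t).div_deriv (hh t) hg' hh' hgpos.self_of_nhds.ne')
  · filter_upwards [hgpos] with s hs using (hh s).div (hg s) hs.ne'
  · filter_upwards [hnear, hgpos] with s hs hs' using ⟨hs', ofReal_div_mem_ball hs⟩

end

theorem E_solves_EPD_general
    (F : ℂ → ℂ → ℂ → ℂ → ℂ)
    (hFanalytic : ∀ a b c : ℂ, DifferentiableOn ℂ (F a b c) (Metric.ball 0 1))
    (hFode : ∀ a b c z : ℂ, z ∈ Metric.ball (0 : ℂ) 1 →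
      z * (1 - z) * deriv (deriv (F a b c)) z
        + (c - (a + b + 1) * z) * deriv (F a b c) z - a * b * F a b c z = 0)
    (m : ℂ) (b : ℝ) (r τ : ℝ) (hτ : 0 < τ)
    (hpos : 0 < (τ + b + 2) ^ 2 - r ^ 2)
    (hdom : |((τ - b) ^ 2 - r ^ 2) / ((τ + b + 2) ^ 2 - r ^ 2)| < 1) :
    deriv (fun τ' : ℝ => deriv (fun τ'' : ℝ => Eker F m b r τ'') τ') τ
      - deriv (fun r' : ℝ => deriv (fun r'' : ℝ => Eker F m b r'' τ) r') r
      + (2 * I * m / ((τ : ℂ) + 1)) * deriv (fun τ' : ℝ => Eker F m b r τ') τ = 0 := by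
  have hA : |(τ - b) ^ 2 - r ^ 2| < (τ + b + 2) ^ 2 - r ^ 2 := by
    rwa [abs_div, abs_of_pos hpos, div_lt_one hpos] at hdom
  have hf := hFanalytic (I * m) (I * m) 1
  have hgτ : ∀ s, HasDerivAt (fun s => (s + b + 2) ^ 2 - r ^ 2) (2 * (s + b + 2)) s := fun s =>
    ((((hasDerivAt_id' s).add_const b).add_const 2).pow 2 |>.sub_const _).congr_deriv (by ring)
  have hhτ : ∀ s, HasDerivAt (fun s => (s - b) ^ 2 - r ^ 2) (2 * (s - b)) s := fun s =>
    (((hasDerivAt_id' s).sub_const b).pow 2 |>.sub_const _).congr_deriv (by ring)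
  have hgr : ∀ s, HasDerivAt (fun s => (τ + b + 2) ^ 2 - s ^ 2) (-(2 * s)) s := fun s =>
    (((hasDerivAt_id' s).pow 2).const_sub _).congr_deriv (by ring)
  have hhr : ∀ s, HasDerivAt (fun s => (τ - b) ^ 2 - s ^ 2) (-(2 * s)) s := fun s =>
    (((hasDerivAt_id' s).pow 2).const_sub _).congr_deriv (by ring)
  have hτ₁ := (hgτ τ).ofReal_cpow_neg_mul_comp (a := I * m)
    ((hhτ τ).fun_div (hgτ τ) hpos.ne')
    (hf.differentiableAt (Metric.isOpen_ball.mem_nhds (ofReal_div_mem_ball hA))).hasDerivAt hpos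
  have hτ₂ := hasDerivAt_deriv_ofReal_cpow_neg_mul_comp_div (a := I * m) hf hgτ hhτ
    ((((hasDerivAt_id' τ).add_const b).add_const 2).const_mul 2 |>.congr_deriv (mul_one 2))
    (((hasDerivAt_id' τ).sub_const b).const_mul 2 |>.congr_deriv (mul_one 2)) hA
  have hr₂ := hasDerivAt_deriv_ofReal_cpow_neg_mul_comp_div (a := I * m) (g'' := -2) (h'' := -2)
    hf hgr hhr (((hasDerivAt_id' r).const_mul 2).neg.congr_deriv (by ring))
    (((hasDerivAt_id' r).const_mul 2).neg.congr_deriv (by ring)) hA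
  have hode := hFode (I * m) (I * m) 1 _ (ofReal_div_mem_ball hA)
  simp only [Eker_eq_const_mul, deriv_const_mul_field', hτ₁.deriv, hτ₂.deriv, hr₂.deriv]
  have hA0 : (((τ + b + 2) ^ 2 - r ^ 2 : ℝ) : ℂ) ≠ 0 := ofReal_ne_zero.mpr hpos.ne'
  have hT : (τ : ℂ) + 1 ≠ 0 := by exact_mod_cast (by linarith : τ + 1 ≠ 0)
  linear_combination (norm := skip) (2 : ℂ) ^ (2 * I * m) * ((1 + b : ℝ) : ℂ) ^ (2 * I * m)
    * (((τ + b + 2) ^ 2 - r ^ 2 : ℝ) : ℂ) ^ (-(I * m)) * 4 * (b + 1)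
    / ((((τ + b + 2) ^ 2 - r ^ 2 : ℝ) : ℂ) * (τ + 1)) * hode
  push_cast at hA0 ⊢
  field_simp
  ring

/-- The kernel E satisfies the generalized Euler–Poisson–Darboux equation
∂²_τ E − ∂²_r E + (2im/(τ+1)) ∂_τ E = 0, where F is a Gauss hypergeometric
function: analytic on the unit disc and satisfying the hypergeometric ODE
z(1−z)F'' + (c−(a+b+1)z)F' − abF = 0. -/
theorem E_solves_EPD
    (F : ℂ → ℂ → ℂ → ℂ → ℂ)
    (hFanalytic : ∀ a b c : ℂ, DifferentiableOn ℂ (F a b c) (Metric.ball 0 1))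
    (hFode : ∀ a b c z : ℂ, z ∈ Metric.ball (0 : ℂ) 1 →
      z * (1 - z) * deriv (deriv (F a b c)) z
        + (c - (a + b + 1) * z) * deriv (F a b c) z - a * b * F a b c z = 0)
    (m : ℂ) (b : ℝ) (hb : 0 < b) (r τ : ℝ) (hτ : 0 < τ)
    (hpos : 0 < (τ + b + 2) ^ 2 - r ^ 2)
    (hdom : |((τ - b) ^ 2 - r ^ 2) / ((τ + b + 2) ^ 2 - r ^ 2)| < 1) :
    deriv (fun τ' : ℝ => deriv (fun τ'' : ℝ => Eker F m b r τ'') τ') τ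
      - deriv (fun r' : ℝ => deriv (fun r'' : ℝ => Eker F m b r'' τ) r') r
      + (2 * I * m / ((τ : ℂ) + 1)) * deriv (fun τ' : ℝ => Eker F m b r τ') τ = 0 :=
  E_solves_EPD_general F hFanalytic hFode m b r τ hτ hpos hdom
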